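/- Let X be a projective variety of dimension n > 0 over an algebraically closed field k of characteristic p > 0. If dim_k H^{n-1}(X, O_X)^{ss} < dim_k H^n(X, O_X)^{ss}, where (−)^{ss} denotes the Frobenius-semistable part, then for every j ≥ 1 the W(k)-length of H^n(X, W_j O_X)^{ss} is at least j; in particular these lengths grow without bound as j → ∞. -/

import Mathlib

/-!
The semistable parts `S j` of the `H j` are eventual images of Frobenius, which exist since the
modules are Artinian. `R j` commutes with Frobenius and is onto, so it maps `S (j + 1)` onto `S j`.
Its kernel `V j (H 1)` meets `S (j + 1)` nontrivially: otherwise `S 1 ⊆ ker V j = range B`, and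
Frobenius-stability of `S 1` gives `S 1 ⊆ B(P^{ss})`, of length at most that of `P^{ss}`, against
the hypothesis. Hence each step in `j` adds at least one to the length, starting from `S 1 ≠ 0`.
-/

noncomputable section

/-- The `i`-th power (`i : ℤ`) of the Witt-vector Frobenius automorphism `σ` of `W(k)`. -/
def sigmaZPow (p : ℕ) [Fact p.Prime] (k : Type*) [Field k] [CharP k p] [PerfectRing k p]
    (i : ℤ) : WittVector p k ≃+* WittVector p k :=
  ((WittVector.frobeniusEquiv p k : RingAut (WittVector p k)) ^ i :
    RingAut (WittVector p k))

/-- Length of a module, as the Krull dimension of its lattice of submodules. -/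
def moduleLength (R M : Type*) [Ring R] [AddCommGroup M] [Module R M] : WithBot ℕ∞ :=
  Order.krullDim (Submodule R M)

open Function Set

/-- For the Frobenius action on a finite-length module this is its semistable part `M^{ss}`. -/
def IsEventualRange {α : Type*} (f : α → α) (s : Set α) : Prop :=
  ∃ e, (∀ e', e ≤ e' → range f^[e'] = range f^[e]) ∧ s = range f^[e]

theorem Function.Semiconj.image_range_iterate {α β : Type*} {φ : α → β} {f : α → α}
    {g : β → β} (h : Semiconj φ f g) (e : ℕ) : φ '' range f^[e] = g^[e] '' range φ := by
  rw [← range_comp, (h.iterate_right e).comp_eq, range_comp]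

namespace IsEventualRange

variable {α β : Type*} {f : α → α} {g : β → β} {φ : α → β} {s : Set α} {t : Set β}

theorem exists_forall_ge_eq_range_iterate (hs : IsEventualRange f s) :
    ∃ e₀, ∀ e, e₀ ≤ e → s = range f^[e] := by
  obtain ⟨e₀, he₀, rfl⟩ := hs
  exact ⟨e₀, fun e he => (he₀ e he).symm⟩

theorem unique {s' : Set α} (hs : IsEventualRange f s) (hs' : IsEventualRange f s') : s = s' := by
  obtain ⟨e, he⟩ := hs.exists_forall_ge_eq_range_iterate
  obtain ⟨e', he'⟩ := hs'.exists_forall_ge_eq_range_iterate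
  rw [he _ (le_max_left e e'), he' _ (le_max_right e e')]

theorem image_iterate (hs : IsEventualRange f s) (m : ℕ) : f^[m] '' s = s := by
  obtain ⟨e, he, rfl⟩ := hs
  rw [← range_comp, ← iterate_add, he _ (Nat.le_add_left e m)]

theorem image_subset (hφ : Semiconj φ f g) (hs : IsEventualRange f s)
    (ht : IsEventualRange g t) : φ '' s ⊆ t := by
  obtain ⟨e, he⟩ := hs.exists_forall_ge_eq_range_iterate
  obtain ⟨e', he'⟩ := ht.exists_forall_ge_eq_range_iterate
  rw [he _ (le_max_left e e'), he' _ (le_max_right e e'), hφ.image_range_iterate]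
  exact image_subset_range _ _

theorem image_eq (hφ : Semiconj φ f g) (hφs : Surjective φ) (hs : IsEventualRange f s)
    (ht : IsEventualRange g t) : φ '' s = t := by
  obtain ⟨e, he⟩ := hs.exists_forall_ge_eq_range_iterate
  obtain ⟨e', he'⟩ := ht.exists_forall_ge_eq_range_iterate
  rw [he _ (le_max_left e e'), he' _ (le_max_right e e'), hφ.image_range_iterate, hφs.range_eq,
    image_univ]

theorem subset_image_range_iterate (hφ : Semiconj φ f g) (ht : IsEventualRange g t)
    (htφ : t ⊆ range φ) (e : ℕ) : t ⊆ φ '' range f^[e] := by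
  rw [hφ.image_range_iterate, ← ht.image_iterate e]
  exact image_mono htφ

end IsEventualRange

section Semilinear

variable {A : Type*} [Ring A] {σ : A →+* A} [RingHomSurjective σ]
  {M : Type*} [AddCommGroup M] [Module A M]

def LinearMap.semilinearIterateRange (f : M →ₛₗ[σ] M) : ℕ → Submodule A M
  | 0 => ⊤
  | n + 1 => (f.semilinearIterateRange n).map f

theorem LinearMap.coe_semilinearIterateRange (f : M →ₛₗ[σ] M) (n : ℕ) :
    (f.semilinearIterateRange n : Set M) = Set.range f^[n] := by
  induction n with
  | zero => simp [semilinearIterateRange]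
  | succ n ih =>
    rw [semilinearIterateRange, Submodule.map_coe, ih, iterate_succ', Set.range_comp]

theorem exists_isEventualRange [IsArtinian A M] (f : M →ₛₗ[σ] M) :
    ∃ S : Submodule A M, IsEventualRange f S := by
  have hanti : Antitone f.semilinearIterateRange := antitone_nat_of_succ_le fun n => by
    rw [← SetLike.coe_subset_coe, f.coe_semilinearIterateRange, f.coe_semilinearIterateRange,
      iterate_succ]
    exact range_comp_subset_range _ _
  obtain ⟨e, he⟩ := IsArtinian.monotone_stabilizes ⟨_, hanti.dual_right⟩
  refine ⟨f.semilinearIterateRange e, e, fun e' he' => ?_, f.coe_semilinearIterateRange e⟩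
  rw [← f.coe_semilinearIterateRange, ← f.coe_semilinearIterateRange]
  exact congrArg SetLike.coe (he e' he').symm

end Semilinear

section Length

variable {R R₂ : Type*} [Ring R] [Ring R₂] {τ : R →+* R₂} [RingHomSurjective τ]
  {M N : Type*} [AddCommGroup M] [Module R M] [AddCommGroup N] [Module R₂ N]

theorem Module.length_le_of_surjective_semilinearMap (f : M →ₛₗ[τ] N) (hf : Surjective f) :
    Module.length R₂ N ≤ Module.length R M := by
  rw [← WithBot.coe_le_coe, Module.coe_length, Module.coe_length]
  exact Order.krullDim_le_of_strictMono _ (Submodule.comap_strictMono_of_surjective hf)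

theorem Submodule.length_map_le (f : M →ₛₗ[τ] N) (S : Submodule R M) :
    Module.length R₂ (S.map f) ≤ Module.length R S :=
  Module.length_le_of_surjective_semilinearMap _ (f.submoduleMap_surjective S)

theorem Submodule.length_mono {S T : Submodule R M} (h : S ≤ T) :
    Module.length R S ≤ Module.length R T := by
  simpa only [Module.length_submodule] using Order.height_mono h

theorem Submodule.length_map_add_one_le {N : Type*} [AddCommGroup N] [Module R N]
    (g : M →ₗ[R] N) {S : Submodule R M} {x : M} (hxS : x ∈ S) (hx : x ≠ 0) (hgx : g x = 0) :
    Module.length R (S.map g) + 1 ≤ Module.length R S := by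
  let g' := g.submoduleMap S
  rw [Module.length_eq_add_of_exact (LinearMap.ker g').subtype g' (Submodule.subtype_injective _)
    (g.submoduleMap_surjective S) (LinearMap.exact_subtype_ker_map g'), add_comm]
  have : Nontrivial (LinearMap.ker g') :=
    nontrivial_of_ne ⟨⟨x, hxS⟩, Subtype.ext hgx⟩ 0 fun h => hx (by simpa using congrArg (·.1.1) h)
  gcongr
  exact Order.one_le_iff_pos.mpr Module.length_pos

end Length

namespace IsEventualRange

variable {R R₂ : Type*} [Ring R] [Ring R₂] {M N P : Type*} [AddCommGroup M] [Module R M]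
  [AddCommGroup N] [Module R N] [AddCommGroup P] [Module R₂ P]

/-- As `fP` maps its eventual range `SP` onto itself, `SP ⊆ range b` forces `SP ⊆ b '' SM`. -/
theorem length_le_of_subset_range {τ : R →+* R₂} [RingHomSurjective τ] (b : M →ₛₗ[τ] P)
    {fM : M → M} {fP : P → P} (hb : Semiconj b fM fP) {SM : Submodule R M} {e : ℕ}
    (hSM : (SM : Set M) = range fM^[e]) {SP : Submodule R₂ P} (hSP : IsEventualRange fP SP)
    (hsub : (SP : Set P) ⊆ range b) :
    Module.length R₂ SP ≤ Module.length R SM := by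
  refine (Submodule.length_mono fun x hx => ?_).trans (SM.length_map_le b)
  rw [← SetLike.mem_coe, Submodule.map_coe, hSM]
  exact hSP.subset_image_range_iterate hb hsub e hx

theorem length_add_one_le (g : M →ₗ[R] N) {fM : M → M} {fN : N → N} (hg : Semiconj g fM fN)
    (hgs : Surjective g) {SM : Submodule R M} {SN : Submodule R N}
    (hSM : IsEventualRange fM SM) (hSN : IsEventualRange fN SN) {x : M} (hxS : x ∈ SM)
    (hx : x ≠ 0) (hgx : g x = 0) :
    Module.length R SN + 1 ≤ Module.length R SM := by
  have hmap : SM.map g = SN := SetLike.coe_injective <| by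
    rw [Submodule.map_coe]
    exact hSM.image_eq hg hgs hSN
  exact hmap ▸ Submodule.length_map_add_one_le g hxS hx hgx

end IsEventualRange

theorem length_semistable_part_grows_general
    (p : ℕ) [Fact p.Prime] (k : Type*) [Field k] [IsAlgClosed k] [CharP k p]
    -- `P = H^{n-1}(X, O_X)` and `H j = H^n(X, W_j O_X)` with their Frobenius actions
    (P : Type*) [AddCommGroup P] [Module (WittVector p k) P]
    (H : ℕ → Type*) [∀ j, AddCommGroup (H j)] [∀ j, Module (WittVector p k) (H j)]
    (hHfin : ∀ j, IsFiniteLength (WittVector p k) (H j))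
    (FP : P →+ P) (F : ∀ j, H j →+ H j)
    (hF : ∀ (j : ℕ) (r : WittVector p k) (x : H j),
      F j (r • x) = WittVector.frobenius r • F j x)
    -- the exact sequences `P →B H 1 →V H (j+1) →R H j → 0` of generalized homomorphisms
    (B : ∀ j : ℕ, P →+ H 1) (V : ∀ j : ℕ, H 1 →+ H (j + 1)) (R : ∀ j : ℕ, H (j + 1) →+ H j)
    (iB : ℕ → ℤ)
    (hBsemi : ∀ (j : ℕ) (r : WittVector p k) (x : P),
      B j (r • x) = sigmaZPow p k (iB j) r • B j x)
    (hRsemi : ∀ (j : ℕ) (r : WittVector p k) (x : H (j + 1)), R j (r • x) = r • R j x)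
    (hBcomm : ∀ (j : ℕ) (x : P), B j (FP x) = F 1 (B j x))
    (hVcomm : ∀ (j : ℕ) (x : H 1), V j (F 1 x) = F (j + 1) (V j x))
    (hRcomm : ∀ (j : ℕ) (x : H (j + 1)), R j (F (j + 1) x) = F j (R j x))
    (hRsurj : ∀ j : ℕ, 1 ≤ j → Function.Surjective (R j))
    (hexactV : ∀ j : ℕ, 1 ≤ j → ∀ x : H (j + 1), R j x = 0 ↔ x ∈ Set.range (V j))
    (hexactB : ∀ j : ℕ, 1 ≤ j → ∀ x : H 1, V j x = 0 ↔ x ∈ Set.range (B j))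
    -- the semistable parts of `P` and `H 1`, and the assumption
    -- `dim_k H^{n-1}(X,O_X)^{ss} < dim_k H^n(X,O_X)^{ss}`
    (eP e1 : ℕ)
    (he1 : ∀ e : ℕ, e1 ≤ e → Set.range (⇑(F 1))^[e] = Set.range (⇑(F 1))^[e1])
    (SP : Submodule (WittVector p k) P) (hSP : (SP : Set P) = Set.range (⇑FP)^[eP])
    (S1 : Submodule (WittVector p k) (H 1))
    (hS1 : (S1 : Set (H 1)) = Set.range (⇑(F 1))^[e1])
    (hlt : moduleLength (WittVector p k) SP < moduleLength (WittVector p k) S1) :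
    ∀ j : ℕ, 1 ≤ j → ∀ e : ℕ,
      (∀ e' : ℕ, e ≤ e' → Set.range (⇑(F j))^[e'] = Set.range (⇑(F j))^[e]) →
      ∀ S : Submodule (WittVector p k) (H j),
        (S : Set (H j)) = Set.range (⇑(F j))^[e] →
        ((j : ℕ∞) : WithBot ℕ∞) ≤ moduleLength (WittVector p k) S := by
  let Fₛₗ (j : ℕ) : H j →ₛₗ[(WittVector.frobeniusEquiv p k : WittVector p k →+* WittVector p k)]
      H j := ⟨(F j).toAddHom, hF j⟩
  have (j : ℕ) : IsArtinian (WittVector p k) (H j) :=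
    (isFiniteLength_iff_isNoetherian_isArtinian.mp (hHfin j)).2
  choose ss hss using fun j => exists_isEventualRange (Fₛₗ j)
  have hS1ss : S1 = ss 1 :=
    SetLike.coe_injective (IsEventualRange.unique ⟨e1, he1, hS1⟩ (hss 1))
  have hlt' : Module.length (WittVector p k) SP < Module.length (WittVector p k) (ss 1) := by
    rwa [moduleLength, moduleLength, ← Module.coe_length, ← Module.coe_length,
      WithBot.coe_lt_coe, hS1ss] at hlt
  have hV : ∀ j, 1 ≤ j → ∃ y ∈ ss 1, V j y ≠ 0 := by
    intro j hj
    by_contra! hV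
    exact hlt'.not_ge ((hss 1).length_le_of_subset_range
      (τ := sigmaZPow p k (iB j)) ⟨(B j).toAddHom, hBsemi j⟩ (hBcomm j) hSP
      fun y hy => (hexactB j hj y).mp (hV y hy))
  have hstep : ∀ j, 1 ≤ j →
      Module.length (WittVector p k) (ss j) + 1 ≤ Module.length (WittVector p k) (ss (j + 1)) := by
    intro j hj
    obtain ⟨y, hy, hVy⟩ := hV j hj
    exact (hss (j + 1)).length_add_one_le ⟨(R j).toAddHom, hRsemi j⟩ (hRcomm j) (hRsurj j hj)
      (hss j) ((hss 1).image_subset (hVcomm j) (hss (j + 1)) ⟨y, hy, rfl⟩) hVy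
      ((hexactV j hj _).mpr ⟨y, rfl⟩)
  have hlen : ∀ j : ℕ, 1 ≤ j → (j : ℕ∞) ≤ Module.length (WittVector p k) (ss j) := by
    intro j hj
    induction j, hj using Nat.le_induction with
    | base => exact Order.one_le_iff_pos.mpr (pos_of_gt hlt')
    | succ j hj ih => exact (by gcongr : (j + 1 : ℕ∞) ≤ _).trans (hstep j hj)
  intro j hj e he S hS
  rw [SetLike.coe_injective (IsEventualRange.unique ⟨e, he, hS⟩ (hss j)), moduleLength,
    ← Module.coe_length]
  exact_mod_cast hlen j hj

/-- Let `X` be a projective variety of dimension `n > 0` over an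
algebraically closed field `k` of characteristic `p > 0`, with
`dim_k H^{n-1}(X,O_X)^{ss} < dim_k H^n(X,O_X)^{ss}`. Then for every `j ≥ 1` the
`W(k)`-length of `H^n(X, W_j O_X)^{ss}` is at least `j`; in particular these lengths grow
without bound. The cohomology is modeled by its defining data: finite-length
`W(k)`-modules `P = H^{n-1}(X,O_X)`, `H j = H^n(X,W_j O_X)` with σ-semilinear Frobenius
actions, the exact sequences `P →B H 1 →V H (j+1) →R H j → 0` of generalized
`W(k)_σ`-homomorphisms, and semistable parts realized as stable images of Frobenius
iterates. -/
theorem length_semistable_part_grows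
    (p : ℕ) [Fact p.Prime] (k : Type*) [Field k] [IsAlgClosed k] [CharP k p]
    -- `P = H^{n-1}(X, O_X)` and `H j = H^n(X, W_j O_X)` with their Frobenius actions
    (P : Type*) [AddCommGroup P] [Module (WittVector p k) P]
    (H : ℕ → Type*) [∀ j, AddCommGroup (H j)] [∀ j, Module (WittVector p k) (H j)]
    (hPfin : IsFiniteLength (WittVector p k) P)
    (hHfin : ∀ j, IsFiniteLength (WittVector p k) (H j))
    (FP : P →+ P) (F : ∀ j, H j →+ H j)
    (hFP : ∀ (r : WittVector p k) (x : P), FP (r • x) = WittVector.frobenius r • FP x)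
    (hF : ∀ (j : ℕ) (r : WittVector p k) (x : H j),
      F j (r • x) = WittVector.frobenius r • F j x)
    -- the exact sequences `P →B H 1 →V H (j+1) →R H j → 0` of generalized homomorphisms
    (B : ∀ j : ℕ, P →+ H 1) (V : ∀ j : ℕ, H 1 →+ H (j + 1)) (R : ∀ j : ℕ, H (j + 1) →+ H j)
    (iB : ℕ → ℤ)
    (hBsemi : ∀ (j : ℕ) (r : WittVector p k) (x : P),
      B j (r • x) = sigmaZPow p k (iB j) r • B j x)
    (hVsemi : ∀ (j : ℕ) (r : WittVector p k) (x : H 1),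
      V j (r • x) = sigmaZPow p k (-(j : ℤ)) r • V j x)
    (hRsemi : ∀ (j : ℕ) (r : WittVector p k) (x : H (j + 1)), R j (r • x) = r • R j x)
    (hBcomm : ∀ (j : ℕ) (x : P), B j (FP x) = F 1 (B j x))
    (hVcomm : ∀ (j : ℕ) (x : H 1), V j (F 1 x) = F (j + 1) (V j x))
    (hRcomm : ∀ (j : ℕ) (x : H (j + 1)), R j (F (j + 1) x) = F j (R j x))
    (hRsurj : ∀ j : ℕ, 1 ≤ j → Function.Surjective (R j))
    (hexactV : ∀ j : ℕ, 1 ≤ j → ∀ x : H (j + 1), R j x = 0 ↔ x ∈ Set.range (V j))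
    (hexactB : ∀ j : ℕ, 1 ≤ j → ∀ x : H 1, V j x = 0 ↔ x ∈ Set.range (B j))
    -- the semistable parts of `P` and `H 1`, and the assumption
    -- `dim_k H^{n-1}(X,O_X)^{ss} < dim_k H^n(X,O_X)^{ss}`
    (eP e1 : ℕ)
    (heP : ∀ e : ℕ, eP ≤ e → Set.range (⇑FP)^[e] = Set.range (⇑FP)^[eP])
    (he1 : ∀ e : ℕ, e1 ≤ e → Set.range (⇑(F 1))^[e] = Set.range (⇑(F 1))^[e1])
    (SP : Submodule (WittVector p k) P) (hSP : (SP : Set P) = Set.range (⇑FP)^[eP])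
    (S1 : Submodule (WittVector p k) (H 1))
    (hS1 : (S1 : Set (H 1)) = Set.range (⇑(F 1))^[e1])
    (hlt : moduleLength (WittVector p k) SP < moduleLength (WittVector p k) S1) :
    ∀ j : ℕ, 1 ≤ j → ∀ e : ℕ,
      (∀ e' : ℕ, e ≤ e' → Set.range (⇑(F j))^[e'] = Set.range (⇑(F j))^[e]) →
      ∀ S : Submodule (WittVector p k) (H j),
        (S : Set (H j)) = Set.range (⇑(F j))^[e] →
        ((j : ℕ∞) : WithBot ℕ∞) ≤ moduleLength (WittVector p k) S :=
  length_semistable_part_grows_general p k P H hHfin FP F hF B V R iB hBsemi hRsemi hBcomm hVcomm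
    hRcomm hRsurj hexactV hexactB eP e1 he1 SP hSP S1 hS1 hlt
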